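/- Let n ≥ 3, g the n-cycle (1 2 ... n) and h the reversal i ↦ n+1-i in S_n. If n ≡ 0 (mod 4), then the intersection of ⟨g,h⟩ with A_n equals the subgroup generated by g^2 and h, and this intersection has order n. -/

import Mathlib

/-!
The reversal `r` is an involution conjugating the rotation `g` to `g⁻¹`, so `⟨g, r⟩` is the
dihedral group `⟨g⟩ ∪ r⟨g⟩`. When `4 ∣ n` the `n`-cycle `g` is odd while `r`, a product of
`n / 2` transpositions, is even; hence `gᵏ` and `r gᵏ` are even exactly when `k` is, and the
even elements form `⟨g², r⟩ = ⟨g²⟩ ∪ r⟨g²⟩`, of order `2 · (n / 2) = n`.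
-/

open Equiv Equiv.Perm Pointwise

namespace Subgroup

variable {G : Type*} [Group G] {a h : G}

theorem mem_normalizer_zpowers_of_conj_eq_inv (hah : h * a * h⁻¹ = a⁻¹) :
    h ∈ normalizer (zpowers a : Set G) := by
  rw [mem_normalizer_iff_map_conj_eq, MonoidHom.map_zpowers]
  change zpowers (h * a * h⁻¹) = zpowers a
  rw [hah, zpowers_inv]

theorem coe_zpowers_of_mul_self_eq_one (hh : h * h = 1) : (zpowers h : Set G) = {1, h} := by
  ext x
  simp only [SetLike.mem_coe, mem_zpowers_iff, Set.mem_insert_iff, Set.mem_singleton_iff]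
  constructor
  · rintro ⟨k, rfl⟩
    obtain ⟨j, rfl | rfl⟩ := Int.even_or_odd' k
    · left
      rw [zpow_mul, zpow_two, hh, one_zpow]
    · right
      rw [zpow_add_one, zpow_mul, zpow_two, hh, one_zpow, one_mul]
  · rintro (rfl | rfl)
    exacts [⟨0, zpow_zero _⟩, ⟨1, zpow_one _⟩]

theorem coe_closure_pair_of_conj_eq_inv (hh : h * h = 1) (hah : h * a * h⁻¹ = a⁻¹) :
    (closure {a, h} : Set G) = (zpowers a : Set G) ∪ h • (zpowers a : Set G) := by
  have hnorm : zpowers h ≤ normalizer (zpowers a : Set G) :=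
    zpowers_le.mpr (mem_normalizer_zpowers_of_conj_eq_inv hah)
  rw [Set.insert_eq, closure_union, ← zpowers_eq_closure, ← zpowers_eq_closure, sup_comm,
    coe_mul_of_left_le_normalizer_right _ _ hnorm, coe_zpowers_of_mul_self_eq_one hh,
    Set.insert_eq, Set.union_mul, Set.singleton_mul, Set.singleton_mul]
  simp only [one_mul, Set.image_id']
  rfl

theorem notMem_zpowers_of_conj_eq_inv (hah : h * a * h⁻¹ = a⁻¹) (ha : a ^ 2 ≠ 1) :
    h ∉ zpowers a := by
  intro hmem
  obtain ⟨k, rfl⟩ := mem_zpowers_iff.mp hmem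
  rw [(Commute.zpow_left (Commute.refl a) k).eq, mul_inv_cancel_right] at hah
  apply ha
  rw [sq]
  nth_rw 2 [hah]
  exact mul_inv_cancel a

theorem card_closure_pair_of_conj_eq_inv (hh : h * h = 1) (hah : h * a * h⁻¹ = a⁻¹)
    (hna : h ∉ zpowers a) : Nat.card (closure {a, h}) = 2 * orderOf a := by
  have hdisj : Disjoint (zpowers a : Set G) (h • (zpowers a : Set G)) := by
    refine Set.disjoint_left.mpr fun x hx ⟨y, hy, hyx⟩ => hna ?_
    have : h = x * y⁻¹ := by rw [← hyx]; exact (mul_inv_cancel_right h y).symm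
    exact this ▸ mul_mem hx (inv_mem hy)
  rw [← Nat.card_zpowers, ← SetLike.coe_sort_coe, Nat.card_coe_set_eq, Set.ncard_def,
    coe_closure_pair_of_conj_eq_inv hh hah, Set.encard_union_eq hdisj, Set.encard_smul_set,
    ← two_mul, ENat.toNat_mul]
  rfl

theorem closure_pair_inf_ker_eq_closure_sq (χ : G →* ℤˣ) (hh : h * h = 1)
    (hah : h * a * h⁻¹ = a⁻¹) (ha : χ a = -1) (hχh : χ h = 1) :
    closure {a, h} ⊓ χ.ker = closure {a ^ 2, h} := by
  have hsq : ∀ y ∈ zpowers a, χ y = 1 → y ∈ closure {a ^ 2, h} := by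
    intro y hy hker
    obtain ⟨k, rfl⟩ := mem_zpowers_iff.mp hy
    obtain ⟨j, rfl⟩ : Even k := by
      by_contra hodd
      rw [map_zpow, ha, neg_one_zpow_eq_ite, if_neg hodd] at hker
      exact absurd hker (by decide)
    rw [← two_mul, zpow_mul, zpow_two, ← sq]
    exact zpow_mem (subset_closure (by simp)) j
  apply le_antisymm
  · intro x hx
    obtain ⟨hx, hker⟩ := mem_inf.mp hx
    rw [← SetLike.mem_coe, coe_closure_pair_of_conj_eq_inv hh hah] at hx
    rcases hx with hx | ⟨y, hy, rfl⟩
    · exact hsq x hx hker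
    · refine mul_mem (subset_closure (by simp)) (hsq y hy ?_)
      simpa [hχh] using hker
  · rw [closure_le]
    rintro _ (rfl | rfl)
    · exact ⟨pow_mem (subset_closure (by simp)) 2, by simp [ha]⟩
    · exact ⟨subset_closure (by simp), hχh⟩

end Subgroup

theorem Fin.revPerm_mul_revPerm (n : ℕ) : (Fin.revPerm : Perm (Fin n)) * Fin.revPerm = 1 := by
  ext; simp

theorem Fin.revPerm_mul_finRotate_mul_revPerm_inv (n : ℕ) :
    (Fin.revPerm : Perm (Fin n)) * finRotate n * Fin.revPerm⁻¹ = (finRotate n)⁻¹ := by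
  ext; simp [Fin.rev_add]

-- `decomposeFin.symm (0, σ)` fixes `0` and acts as `σ` on the successors.
theorem finRotate_succ_mul_revPerm (n : ℕ) :
    finRotate (n + 1) * Fin.revPerm = decomposeFin.symm (0, Fin.revPerm) := by
  ext i
  refine Fin.cases ?_ (fun i => ?_) i
  · simp
  · simp [Fin.rev_succ, Fin.coeSucc_eq_succ]

theorem sign_revPerm_succ (n : ℕ) :
    sign (Fin.revPerm : Perm (Fin (n + 1))) = (-1) ^ n * sign (Fin.revPerm : Perm (Fin n)) := by
  have h := congrArg sign (finRotate_succ_mul_revPerm n)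
  rw [map_mul, sign_finRotate, decomposeFin.symm_sign, if_pos rfl, one_mul] at h
  rw [← h, Nat.succ_sub_one, ← mul_assoc, Int.units_mul_self, one_mul]

theorem sign_revPerm : ∀ n : ℕ, sign (Fin.revPerm : Perm (Fin n)) = (-1) ^ (n / 2)
  | 0 | 1 => by simp [Subsingleton.elim (Fin.revPerm : Perm (Fin _)) 1]
  | n + 2 => by
    rw [sign_revPerm_succ, sign_revPerm_succ, sign_revPerm n, ← mul_assoc, ← pow_add,
      Odd.neg_one_pow ⟨n, by ring⟩, Nat.add_div_right _ two_pos, pow_succ, mul_comm]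

theorem orderOf_finRotate {n : ℕ} (hn : 2 ≤ n) : orderOf (finRotate n) = n := by
  rw [(isCycle_finRotate_of_le hn).orderOf, support_finRotate_of_le hn, Finset.card_univ,
    Fintype.card_fin]

/-- For n ≡ 0 (mod 4), ⟨g,h⟩ ∩ A_n = ⟨g², h⟩ and this intersection has order n. -/
theorem dihedral_inf_alternating_zero (n : ℕ) (hn : 3 ≤ n) (h4 : n % 4 = 0) :
    Subgroup.closure {finRotate n, (Fin.revPerm : Equiv.Perm (Fin n))}
          ⊓ alternatingGroup (Fin n)
        = Subgroup.closure {(finRotate n) ^ 2, (Fin.revPerm : Equiv.Perm (Fin n))} ∧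
      Nat.card ↥(Subgroup.closure {finRotate n, (Fin.revPerm : Equiv.Perm (Fin n))}
          ⊓ alternatingGroup (Fin n)) = n := by
  unfold alternatingGroup
  have hr := Fin.revPerm_mul_revPerm n
  have hconj := Fin.revPerm_mul_finRotate_mul_revPerm_inv n
  have hsign_g : sign (finRotate n) = -1 := by
    rw [sign_finRotate]; exact Odd.neg_one_pow ⟨n / 2 - 1, by omega⟩
  have hsign_r : sign (Fin.revPerm : Perm (Fin n)) = 1 := by
    rw [sign_revPerm]; exact Even.neg_one_pow ⟨n / 4, by omega⟩
  have hinf := Subgroup.closure_pair_inf_ker_eq_closure_sq sign hr hconj hsign_g hsign_r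
  refine ⟨hinf, ?_⟩
  have horder := orderOf_finRotate (by omega : 2 ≤ n)
  have hsq : finRotate n ^ 2 ≠ 1 := fun h =>
    absurd (Nat.le_of_dvd two_pos (horder ▸ orderOf_dvd_of_pow_eq_one h)) (by omega)
  have hna : Fin.revPerm ∉ Subgroup.zpowers (finRotate n ^ 2) := fun h =>
    Subgroup.notMem_zpowers_of_conj_eq_inv hconj hsq
      (Subgroup.zpowers_le.mpr (pow_mem (Subgroup.mem_zpowers _) 2) h)
  have hconj_sq : Fin.revPerm * finRotate n ^ 2 * Fin.revPerm⁻¹ = (finRotate n ^ 2)⁻¹ := by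
    rw [← conj_pow, hconj, inv_pow]
  have heven : 2 ∣ n := Nat.dvd_of_mod_eq_zero (by omega)
  rw [hinf, Subgroup.card_closure_pair_of_conj_eq_inv hr hconj_sq hna,
    orderOf_pow_of_dvd two_ne_zero (by rwa [horder]), horder, Nat.mul_div_cancel' heven]
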